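/- arXiv:cs/0610079 — 2 statements merged into one kernel-verified Lean document; each statement's English description precedes it below -/
import Mathlib

section
/- For all real numbers x, y with 0 ≤ x ≤ 1 and 0 ≤ y ≤ 1 and every natural number n ≥ 1, we have (1 - x·y)^n ≤ 1 - x + e^{-y·n}. -/
theorem covering_inequality (x y : ℝ) (hx0 : 0 ≤ x) (hx1 : x ≤ 1)
    (hy0 : 0 ≤ y) (hy1 : y ≤ 1) (n : ℕ) (hn : 1 ≤ n) :
    (1 - x * y) ^ n ≤ 1 - x + Real.exp (-(y * n)) := by
  have h1y : (0:ℝ) ≤ 1 - y := by linarith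
  have hconv : ConvexOn ℝ (Set.Ici (0:ℝ)) (fun t : ℝ => t ^ n) := convexOn_pow n
  have hkey := hconv.2 (Set.mem_Ici.mpr (zero_le_one)) (Set.mem_Ici.mpr h1y)
    (by linarith : (0:ℝ) ≤ 1 - x) hx0 (by ring)
  simp only [smul_eq_mul] at hkey
  have heq : (1 - x) * 1 + x * (1 - y) = 1 - x * y := by ring
  rw [heq] at hkey
  have h2 : (1 - y) ^ n ≤ Real.exp (-(y * n)) := by
    have : 1 - y ≤ Real.exp (-y) := by
      have := Real.add_one_le_exp (-y); linarith
    calc (1 - y) ^ n ≤ Real.exp (-y) ^ n := pow_le_pow_left₀ h1y this n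
      _ = Real.exp (-(y * n)) := by
          rw [← Real.exp_nat_mul]; ring_nf
  have h3 : x * (1 - y) ^ n ≤ Real.exp (-(y * n)) := by
    calc x * (1 - y) ^ n ≤ 1 * (1 - y) ^ n := by
          apply mul_le_mul_of_nonneg_right hx1 (pow_nonneg h1y n)
      _ = (1 - y) ^ n := one_mul _
      _ ≤ _ := h2
  calc (1 - x * y) ^ n ≤ (1 - x) * 1 ^ n + x * (1 - y) ^ n := hkey
    _ ≤ 1 - x + Real.exp (-(y * n)) := by simp; linarith
end

section
/- For probability mass functions P, Q on a finite set 𝒲, ρ ≥ 0, T := { w : Q(w) > 0 and P(w)/Q(w) ≤ e^{ρ} }, any S ⊆ 𝒲, and any M ≥ 1: (1 - Q(S ∩ T))^M ≤ 1 - P(S ∩ T) + e^{-M e^{-ρ}}. -/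
open scoped Classical

lemma aux_pow_bound (M : ℕ) (x y : ℝ) (hx0 : 0 ≤ x) (hx1 : x ≤ 1)
    (hy0 : 0 ≤ y) (hy1 : y ≤ 1) :
    (1 - x * y) ^ M ≤ 1 - x + Real.exp (-(M * y)) := by
  have hconv := (convexOn_pow M).2 (Set.mem_Ici.2 (by norm_num : (0:ℝ) ≤ 1))
    (Set.mem_Ici.2 (by linarith : (0:ℝ) ≤ 1 - y)) (by linarith : (0:ℝ) ≤ 1 - x) hx0
    (by ring)
  simp only [smul_eq_mul, one_pow] at hconv
  have h1 : (1 - x) * 1 + x * (1 - y) = 1 - x * y := by ring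
  rw [h1] at hconv
  have h2 : x * (1 - y) ^ M ≤ (1 - y) ^ M := by
    have := pow_nonneg (by linarith : (0:ℝ) ≤ 1 - y) M
    nlinarith
  have h3 : (1 - y) ^ M ≤ Real.exp (-(M * y)) := by
    have hb : 1 - y ≤ Real.exp (-y) := by
      have := Real.add_one_le_exp (-y); linarith
    calc (1 - y) ^ M ≤ (Real.exp (-y)) ^ M :=
          pow_le_pow_left₀ (by linarith) hb M
      _ = Real.exp (-(M * y)) := by
          rw [← Real.exp_nat_mul]; ring_nf
  linarith

theorem central_covering_estimate
    {𝒲 : Type*} [Fintype 𝒲]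
    (P Q : 𝒲 → ℝ) (hP : ∀ w, 0 ≤ P w) (hP1 : ∑ w, P w = 1)
    (hQ : ∀ w, 0 ≤ Q w) (hQ1 : ∑ w, Q w = 1)
    (ρ : ℝ) (hρ : 0 ≤ ρ) (S : Finset 𝒲) (M : ℕ) (hM : 1 ≤ M) :
    (1 - ∑ w ∈ S ∩ Finset.univ.filter (fun w => 0 < Q w ∧ P w / Q w ≤ Real.exp ρ), Q w) ^ M
      ≤ 1 - (∑ w ∈ S ∩ Finset.univ.filter (fun w => 0 < Q w ∧ P w / Q w ≤ Real.exp ρ), P w)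
        + Real.exp (-(M * Real.exp (-ρ))) := by
  set T := S ∩ Finset.univ.filter (fun w => 0 < Q w ∧ P w / Q w ≤ Real.exp ρ) with hT
  set x := ∑ w ∈ T, P w with hxdef
  set y := Real.exp (-ρ) with hydef
  have hx0 : 0 ≤ x := Finset.sum_nonneg fun w _ => hP w
  have hx1 : x ≤ 1 := by
    rw [← hP1]
    exact Finset.sum_le_sum_of_subset_of_nonneg (Finset.subset_univ T)
      (fun w _ _ => hP w)
  have hy0 : 0 ≤ y := (Real.exp_pos _).le
  have hy1 : y ≤ 1 := Real.exp_le_one_iff.2 (by linarith)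
  have hQ1' : (∑ w ∈ T, Q w) ≤ 1 := by
    rw [← hQ1]
    exact Finset.sum_le_sum_of_subset_of_nonneg (Finset.subset_univ T)
      (fun w _ _ => hQ w)
  have hkey : x * y ≤ ∑ w ∈ T, Q w := by
    rw [hxdef, Finset.sum_mul]
    apply Finset.sum_le_sum
    intro w hw
    rw [hT, Finset.mem_inter, Finset.mem_filter] at hw
    obtain ⟨-, -, hQw, hr⟩ := hw
    have hPw : P w ≤ Real.exp ρ * Q w := (div_le_iff₀ hQw).1 hr
    calc P w * y ≤ (Real.exp ρ * Q w) * y := by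
          apply mul_le_mul_of_nonneg_right hPw hy0
      _ = Q w * (Real.exp ρ * Real.exp (-ρ)) := by rw [hydef]; ring
      _ = Q w := by rw [← Real.exp_add]; simp
  calc (1 - ∑ w ∈ T, Q w) ^ M ≤ (1 - x * y) ^ M :=
        pow_le_pow_left₀ (by linarith) (by linarith) M
    _ ≤ 1 - x + Real.exp (-(M * y)) := aux_pow_bound M x y hx0 hx1 hy0 hy1
end
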